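/- Suppose Γ(R,U) is connected, and Γ(R,S) is a U-unitary Cayley graph that is connected and whose complement graph is also connected. Then Γ(R,S) is not prime if and only if there exists an ideal I of R with I ≠ 0 and I ≠ R such that the underlying set of I is a homogeneous set in Γ(R,S). -/

import Mathlib

/-!
Take a largest nontrivial homogeneous set `M` of `Γ(R,S)` through `0`. Two intersecting
homogeneous sets have a homogeneous union, and that union cannot be the whole vertex set when
both the graph and its complement are connected; so `M` contains every nontrivial homogeneous
set it meets. Translations and multiplications by units of `U` are automorphisms of `Γ(R,S)`,
so `M` contains `M - g` for `g ∈ M` and `uM` for `u ∈ U`: it is an additive subgroup stable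
under `U`. As `Γ(R,U)` is connected, `U` generates `R` additively, hence `M` is an ideal.
-/

open Pointwise

/-- The Cayley graph of a subset `S` of an additive group: distinct `x, y` are adjacent
iff `x - y ∈ S` (for a symmetric `S` this coincides with the usual definition). -/
def cayleyGraph {G : Type*} [AddCommGroup G] (S : Set G) : SimpleGraph G :=
  SimpleGraph.fromRel (fun x y => x - y ∈ S)

/-- A set `X` of vertices of a graph is homogeneous if every vertex outside `X` is
adjacent either to all vertices of `X` or to none of them. -/
def IsHomogeneous {V : Type*} (G : SimpleGraph V) (X : Set V) : Prop :=
  ∀ v ∉ X, (∀ x ∈ X, G.Adj v x) ∨ (∀ x ∈ X, ¬ G.Adj v x)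

/-- A graph is prime if it has no nontrivial homogeneous set, i.e. no homogeneous set `X`
with `2 ≤ |X|` and `X` a proper subset of the vertex set. -/
def IsPrimeGraph {V : Type*} (G : SimpleGraph V) : Prop :=
  ¬ ∃ X : Set V, 2 ≤ X.ncard ∧ X ≠ Set.univ ∧ IsHomogeneous G X

open Set

section Homogeneous

variable {V V' : Type*} {G : SimpleGraph V} {G' : SimpleGraph V'} {M N : Set V}

theorem IsHomogeneous.compl (h : IsHomogeneous G M) : IsHomogeneous Gᶜ M := by
  intro v hv
  have hne : ∀ x ∈ M, v ≠ x := fun x hx hvx => hv (hvx ▸ hx)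
  rcases h v hv with hadj | hadj
  · exact .inr fun x hx hc => ((G.compl_adj v x).mp hc).2 (hadj x hx)
  · exact .inl fun x hx => (G.compl_adj v x).mpr ⟨hne x hx, hadj x hx⟩

theorem IsHomogeneous.union (hM : IsHomogeneous G M) (hN : IsHomogeneous G N)
    (h : (M ∩ N).Nonempty) : IsHomogeneous G (M ∪ N) := by
  obtain ⟨w, hwM, hwN⟩ := h
  intro v hv
  rw [mem_union, not_or] at hv
  rcases hM v hv.1 with h1 | h1 <;> rcases hN v hv.2 with h2 | h2
  · exact .inl fun x hx => hx.elim (h1 x) (h2 x)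
  · exact absurd (h1 w hwM) (h2 w hwN)
  · exact absurd (h2 w hwN) (h1 w hwM)
  · exact .inr fun x hx => hx.elim (h1 x) (h2 x)

theorem IsHomogeneous.image (h : IsHomogeneous G M) (f : G ≃g G') :
    IsHomogeneous G' (f '' M) := by
  intro v hv
  have hv' : f.symm v ∉ M := fun hm => hv ⟨_, hm, f.apply_symm_apply v⟩
  rcases h _ hv' with hadj | hadj
  · refine .inl ?_
    rintro _ ⟨m, hm, rfl⟩
    simpa using f.map_adj_iff.mpr (hadj m hm)
  · refine .inr ?_
    rintro _ ⟨m, hm, rfl⟩ hvm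
    rw [← f.apply_symm_apply v, f.map_adj_iff] at hvm
    exact hadj m hm hvm

/-- The case of `IsHomogeneous.union_ne_univ` in which some vertex of `M` sees no vertex of
`N`; the other case is this one in the complement graph. -/
theorem IsHomogeneous.union_ne_univ_of_forall_not_adj (hG : G.Preconnected)
    (hM : IsHomogeneous G M) (hN : IsHomogeneous G N) (hMN : (M ∩ N).Nonempty)
    (hMu : M ≠ univ) {a : V} (ha : a ∈ M) (haN : ∀ x ∈ N, ¬G.Adj a x) :
    M ∪ N ≠ univ := by
  intro hcover
  obtain ⟨w, hw⟩ := hMN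
  obtain ⟨b, hbM⟩ := (ne_univ_iff_exists_notMem M).mp hMu
  have hbN : b ∈ N := ((eq_univ_iff_forall.mp hcover) b).resolve_left hbM
  obtain ⟨⟨⟨x, y⟩, hxy⟩, -, hx, hy⟩ :=
    (hG w b).some.exists_boundary_dart (M ∩ N) hw fun hb => hbM hb.1
  simp only [mem_inter_iff, not_and_or] at hx hy
  rcases (eq_univ_iff_forall.mp hcover) y with hyM | hyN
  · have hyN : y ∉ N := fun hyN => hy.elim (· hyM) (· hyN)
    rcases hN y hyN with hall | hnone
    · rcases hM b hbM with hbM' | hbM'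
      · exact haN b hbN (hbM' a ha).symm
      · exact hbM' y hyM (hall b hbN).symm
    · exact hnone x hx.2 hxy.symm
  · have hyM : y ∉ M := fun hyM => hy.elim (· hyM) (· hyN)
    rcases hM y hyM with hall | hnone
    · exact haN y hyN (hall a ha).symm
    · exact hnone x hx.1 hxy.symm

theorem IsHomogeneous.union_ne_univ (hG : G.Preconnected) (hGc : Gᶜ.Preconnected)
    (hM : IsHomogeneous G M) (hN : IsHomogeneous G N) (hMN : (M ∩ N).Nonempty)
    (hMu : M ≠ univ) (hNu : N ≠ univ) : M ∪ N ≠ univ := by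
  intro hcover
  obtain ⟨a, haN⟩ := (ne_univ_iff_exists_notMem N).mp hNu
  have ha : a ∈ M := ((eq_univ_iff_forall.mp hcover) a).resolve_right haN
  rcases hN a haN with hall | hnone
  · refine hM.compl.union_ne_univ_of_forall_not_adj hGc hN.compl hMN hMu ha
      (fun x hx hc => ((G.compl_adj a x).mp hc).2 (hall x hx)) hcover
  · exact hM.union_ne_univ_of_forall_not_adj hG hN hMN hMu ha hnone hcover

end Homogeneous

def IsNontrivialHomogeneous {V : Type*} (G : SimpleGraph V) (X : Set V) : Prop :=
  2 ≤ X.ncard ∧ X ≠ univ ∧ IsHomogeneous G X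

section Nontrivial

variable {V V' : Type*} {G : SimpleGraph V} {G' : SimpleGraph V'} {M N : Set V}

theorem IsNontrivialHomogeneous.image (h : IsNontrivialHomogeneous G M) (f : G ≃g G') :
    IsNontrivialHomogeneous G' (f '' M) := by
  refine ⟨?_, fun hu => h.2.1 ?_, h.2.2.image f⟩
  · rw [ncard_image_of_injective _ f.injective]
    exact h.1
  · rw [← image_univ_of_surjective f.surjective] at hu
    exact image_injective.mpr f.injective hu

theorem MaximalFor.image_isNontrivialHomogeneous
    (hM : MaximalFor (IsNontrivialHomogeneous G) ncard M) (f : G ≃g G') :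
    MaximalFor (IsNontrivialHomogeneous G') ncard (f '' M) := by
  refine ⟨hM.1.image f, fun N hN hle => ?_⟩
  rw [ncard_image_of_injective _ f.injective] at hle ⊢
  have hN' := hM.2 (hN.image f.symm) (by rwa [ncard_image_of_injective _ f.symm.injective])
  rwa [ncard_image_of_injective _ f.symm.injective] at hN'

theorem MaximalFor.subset_of_isNontrivialHomogeneous [Finite V]
    (hG : G.Preconnected) (hGc : Gᶜ.Preconnected)
    (hM : MaximalFor (IsNontrivialHomogeneous G) ncard M) (hN : IsNontrivialHomogeneous G N)
    (hMN : (M ∩ N).Nonempty) : N ⊆ M := by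
  have hunion : IsNontrivialHomogeneous G (M ∪ N) :=
    ⟨hM.1.1.trans (ncard_le_ncard subset_union_left),
      hM.1.2.2.union_ne_univ hG hGc hN.2.2 hMN hM.1.2.1 hN.2.1, hM.1.2.2.union hN.2.2 hMN⟩
  have hle := ncard_le_ncard (s := M) (t := M ∪ N) subset_union_left
  have heq : M = M ∪ N := eq_of_subset_of_ncard_le subset_union_left (hM.2 hunion hle)
  exact heq ▸ subset_union_right

theorem MaximalFor.image_subset_of_isNontrivialHomogeneous [Finite V]
    (hG : G.Preconnected) (hGc : Gᶜ.Preconnected)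
    (hM : MaximalFor (IsNontrivialHomogeneous G) ncard M) (f : G ≃g G)
    (hMf : (M ∩ f '' M).Nonempty) : f '' M ⊆ M :=
  hM.subset_of_isNontrivialHomogeneous hG hGc (hM.1.image f) hMf

end Nontrivial

section CayleyGraph

variable {A : Type*} [AddCommGroup A] {S : Set A}

theorem cayleyGraph_adj {x y : A} :
    (cayleyGraph S).Adj x y ↔ x ≠ y ∧ (x - y ∈ S ∨ y - x ∈ S) := by
  simp [cayleyGraph, SimpleGraph.fromRel_adj]

def cayleyGraphIsoOfSubMemIff (f : A ≃ A) (hf : ∀ x y, f x - f y ∈ S ↔ x - y ∈ S) :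
    cayleyGraph S ≃g cayleyGraph S where
  toEquiv := f
  map_rel_iff' := by simp [cayleyGraph_adj, hf]

def cayleyGraphAddRight (g : A) : cayleyGraph S ≃g cayleyGraph S :=
  cayleyGraphIsoOfSubMemIff (Equiv.addRight g) fun x y => by simp

theorem AddSubgroup.closure_eq_top_of_preconnected_cayleyGraph
    (h : (cayleyGraph S).Preconnected) : AddSubgroup.closure S = ⊤ := by
  refine eq_top_iff.mpr fun r _ => by_contra fun hr => ?_
  obtain ⟨⟨⟨x, y⟩, hxy⟩, -, hx, hy⟩ :=
    (h 0 r).some.exists_boundary_dart (AddSubgroup.closure S) (zero_mem _) hr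
  have hyx : y - x ∈ AddSubgroup.closure S := by
    rcases (cayleyGraph_adj.mp hxy).2 with hs | hs
    · simpa using neg_mem (AddSubgroup.subset_closure hs)
    · exact AddSubgroup.subset_closure hs
  exact hy (by simpa using add_mem hyx hx)

end CayleyGraph

section Ring

variable {R : Type*} [CommRing R] {S : Set R}

def cayleyGraphUnitsMul (u : Rˣ) (hu : (u : R) • S = S) : cayleyGraph S ≃g cayleyGraph S :=
  cayleyGraphIsoOfSubMemIff (Units.mulLeft u) fun x y => by
    simp only [Units.mulLeft_apply, ← mul_sub]
    conv_lhs => rw [← hu]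
    exact smul_mem_smul_set_iff (a := u)

theorem exists_ideal_coe_eq_of_closure_eq_top {T : Set R} (hT : AddSubgroup.closure T = ⊤)
    (M : AddSubgroup R) (hM : ∀ t ∈ T, ∀ m ∈ M, t * m ∈ M) :
    ∃ I : Ideal R, (I : Set R) = M := by
  refine ⟨{ M.toAddSubmonoid with smul_mem' := fun r m hm => ?_ }, rfl⟩
  have hr : r ∈ AddSubgroup.closure T := hT ▸ AddSubgroup.mem_top r
  induction hr using AddSubgroup.closure_induction with
  | mem t ht => exact hM t ht m hm
  | zero => simp
  | add a b _ _ ha hb => simpa [add_mul] using M.add_mem ha hb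
  | neg a _ ha => simpa [neg_mul] using M.neg_mem ha

theorem Ideal.two_le_ncard_iff_ne_bot [Finite R] (I : Ideal R) :
    2 ≤ (I : Set R).ncard ↔ I ≠ ⊥ := by
  rw [Nat.succ_le_iff, one_lt_ncard_iff_nontrivial, ← nontrivial_coe_sort,
    ← Submodule.nontrivial_iff_ne_bot]
  rfl

end Ring

theorem stmt6_general {R : Type*} [CommRing R] [Fintype R]
    (U : Subgroup Rˣ)
    (S : Set R)
    (hstable : ∀ u ∈ U, (u : R) • S = S)
    (hconnU : (cayleyGraph ((fun u : Rˣ => (u : R)) '' (U : Set Rˣ))).Connected)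
    (hconnS : (cayleyGraph S).Connected)
    (hanti : ((cayleyGraph S)ᶜ).Connected) :
    ¬ IsPrimeGraph (cayleyGraph S) ↔
      ∃ I : Ideal R, I ≠ ⊥ ∧ I ≠ ⊤ ∧ IsHomogeneous (cayleyGraph S) (I : Set R) := by
  rw [IsPrimeGraph, not_not]
  constructor
  · rintro ⟨X, hX⟩
    obtain ⟨M₀, hM₀⟩ := Finite.exists_maximalFor ncard {X | IsNontrivialHomogeneous _ X}
      (toFinite _) ⟨X, hX⟩
    obtain ⟨m₀, hm₀⟩ := nonempty_of_ncard_ne_zero (s := M₀) (by have := hM₀.1.1; omega)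
    set M := cayleyGraphAddRight (-m₀) '' M₀
    have hM := hM₀.image_isNontrivialHomogeneous (cayleyGraphAddRight (-m₀))
    have hM0 : (0 : R) ∈ M := ⟨m₀, hm₀, add_neg_cancel m₀⟩
    have hsub : ∀ m ∈ M, ∀ g ∈ M, m + -g ∈ M := fun m hm g hg =>
      hM.image_subset_of_isNontrivialHomogeneous hconnS.preconnected hanti.preconnected
        (cayleyGraphAddRight (-g)) ⟨0, hM0, g, hg, add_neg_cancel g⟩ ⟨m, hm, rfl⟩
    have hunits : ∀ u ∈ U, ∀ m ∈ M, (u : R) * m ∈ M := fun u hu m hm =>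
      hM.image_subset_of_isNontrivialHomogeneous hconnS.preconnected hanti.preconnected
        (cayleyGraphUnitsMul u (hstable u hu)) ⟨0, hM0, 0, hM0, mul_zero _⟩ ⟨m, hm, rfl⟩
    obtain ⟨I, hI⟩ := exists_ideal_coe_eq_of_closure_eq_top
      (AddSubgroup.closure_eq_top_of_preconnected_cayleyGraph hconnU.preconnected)
      (AddSubgroup.ofSub M ⟨0, hM0⟩ hsub) (by rintro _ ⟨u, hu, rfl⟩; exact hunits u hu)
    obtain ⟨hM2, hMu, hMhom⟩ : IsNontrivialHomogeneous (cayleyGraph S) (I : Set R) := by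
      rw [hI]
      exact hM.1
    exact ⟨I, I.two_le_ncard_iff_ne_bot.mp hM2, mt Submodule.coe_eq_univ.mpr hMu, hMhom⟩
  · rintro ⟨I, hbot, htop, hI⟩
    exact ⟨I, I.two_le_ncard_iff_ne_bot.mpr hbot, mt Submodule.coe_eq_univ.mp htop, hI⟩

/-- Suppose `Γ(R,U)` is connected and `Γ(R,S)` is a `U`-unitary Cayley
graph that is connected and anti-connected. Then `Γ(R,S)` is not prime iff there exists a
proper nonzero ideal `I` of `R` whose underlying set is homogeneous in `Γ(R,S)`. -/
theorem stmt6 {R : Type*} [CommRing R] [Fintype R]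
    (U : Subgroup Rˣ) (hU : (-1 : Rˣ) ∈ U)
    (S : Set R) (hSsymm : ∀ s ∈ S, -s ∈ S) (hS0 : (0 : R) ∉ S)
    (hstable : ∀ u ∈ U, (u : R) • S = S)
    (hconnU : (cayleyGraph ((fun u : Rˣ => (u : R)) '' (U : Set Rˣ))).Connected)
    (hconnS : (cayleyGraph S).Connected)
    (hanti : ((cayleyGraph S)ᶜ).Connected) :
    ¬ IsPrimeGraph (cayleyGraph S) ↔
      ∃ I : Ideal R, I ≠ ⊥ ∧ I ≠ ⊤ ∧ IsHomogeneous (cayleyGraph S) (I : Set R) :=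
  stmt6_general U S hstable hconnU hconnS hanti
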